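/- For every even natural number k ≥ 2, I_k = ∫₀^{π/2} x·cos^k(x) dx = J_k · ( 1 − (2/π²) · ∑_{j=1}^{k/2} 2^{2j} / (j² · C(2j, j)) ), where J_k = ∫₀^{π/2} x·cos^k(2x) dx and C(2j, j) is the central binomial coefficient. -/

import Mathlib

/-!
Integrating `x cos^{n+1} x · cos x` by parts gives a reduction formula for `∫ x cos^{n+2} x`.
On `[0, π]` all boundary terms vanish for even exponents, so `∫₀^π x cos^{2n} x` is a Wallis-type
product, `π² C(2n, n) / (2 · 4ⁿ)`, and the substitution `x ↦ 2x` shows `J_{2n}` is a quarter of it.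
On `[0, π/2]` the formula reads `I_{2n+2} = (2n+1)/(2n+2) · I_{2n} - 1/(2n+2)²`: the homogeneous part
has the same ratio as `J`, and each inhomogeneous term `1/(2n+2)²` contributes one summand of
`∑ 4ʲ / (j² C(2j, j))`.
-/

open Real intervalIntegral

theorem integral_mul_cos_pow_add_two (a b : ℝ) (n : ℕ) :
    ∫ x in a..b, x * cos x ^ (n + 2) =
      (b * cos b ^ (n + 1) * sin b - a * cos a ^ (n + 1) * sin a) / (n + 2)
        + (cos b ^ (n + 2) - cos a ^ (n + 2)) / (n + 2) ^ 2
        + (n + 1) / (n + 2) * ∫ x in a..b, x * cos x ^ n := by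
  have hu : ∀ x ∈ Set.uIcc a b, HasDerivAt (fun y => y * cos y ^ (n + 1))
      (cos x ^ (n + 1) - (n + 1) * (x * sin x * cos x ^ n)) x := fun x _ =>
    ((hasDerivAt_id' x).fun_mul ((hasDerivAt_cos x).fun_pow (n + 1))).congr_deriv
      (by push_cast; ring)
  have hv : ∀ x ∈ Set.uIcc a b, HasDerivAt sin (cos x) x := fun x _ => hasDerivAt_sin x
  have hF : ∀ x ∈ Set.uIcc a b, HasDerivAt (fun y => -cos y ^ (n + 2) / (n + 2))
      (cos x ^ (n + 1) * sin x) x := fun x _ =>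
    ((hasDerivAt_cos x).fun_pow (n + 2)).fun_neg.div_const ((n : ℝ) + 2) |>.congr_deriv
      (by push_cast; field_simp)
  have hsplit : ∫ x in a..b, (cos x ^ (n + 1) - (n + 1) * (x * sin x * cos x ^ n)) * sin x
      = ∫ x in a..b, cos x ^ (n + 1) * sin x - (n + 1) * (x * cos x ^ n - x * cos x ^ (n + 2)) :=
    integral_congr fun x _ => by
      linear_combination (-(n + 1) * x * cos x ^ n) * sin_sq_add_cos_sq x
  have hparts := integral_mul_deriv_eq_deriv_mul hu hv
    (by apply Continuous.intervalIntegrable; fun_prop)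
    (by apply Continuous.intervalIntegrable; fun_prop)
  rw [hsplit, integral_sub, integral_const_mul, integral_sub,
    integral_eq_sub_of_hasDerivAt hF] at hparts
  · simp only [mul_assoc, ← pow_succ] at hparts
    field_simp at hparts ⊢
    linear_combination hparts
  all_goals apply Continuous.intervalIntegrable; fun_prop

theorem cast_centralBinom_succ (n : ℕ) :
    ((n + 1).centralBinom : ℝ) = 2 * (2 * n + 1) / (n + 1) * n.centralBinom := by
  rw [div_mul_eq_mul_div, eq_div_iff (by positivity), mul_comm]
  exact_mod_cast Nat.succ_mul_centralBinom_succ n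

theorem integral_mul_cos_pow_two_mul_zero_pi (n : ℕ) :
    ∫ x in 0..π, x * cos x ^ (2 * n) = π ^ 2 * n.centralBinom / (2 * 4 ^ n) := by
  induction n with
  | zero => simp [integral_id]
  | succ n ih =>
    rw [mul_add_one, integral_mul_cos_pow_add_two, ih, cast_centralBinom_succ, cos_pi, sin_pi,
      cos_zero, Even.neg_one_pow (n := 2 * n + 2) ⟨n + 1, by ring⟩]
    push_cast
    field_simp
    ring

theorem integral_mul_cos_two_mul_pow (k : ℕ) :
    ∫ x in 0..π / 2, x * cos (2 * x) ^ k = (∫ x in 0..π, x * cos x ^ k) / 4 := by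
  have h := integral_comp_mul_left (fun u => u * cos u ^ k) (two_ne_zero (α := ℝ))
    (a := 0) (b := π / 2)
  simp only [mul_zero, mul_div_cancel₀ π two_ne_zero, mul_assoc, integral_const_mul,
    smul_eq_mul] at h
  linarith

theorem integral_mul_cos_pow_two_mul (n : ℕ) :
    ∫ x in 0..π / 2, x * cos x ^ (2 * n) =
      (π ^ 2 - 2 * ∑ j ∈ Finset.Icc 1 n, (4 : ℝ) ^ j / (j ^ 2 * j.centralBinom))
        * n.centralBinom / (8 * 4 ^ n) := by
  induction n with
  | zero => simp [integral_id]; ring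
  | succ n ih =>
    rw [mul_add_one, integral_mul_cos_pow_add_two, ih, cast_centralBinom_succ, cos_pi_div_two,
      sin_pi_div_two, cos_zero, Finset.sum_Icc_succ_top (by omega), cast_centralBinom_succ]
    have hC := n.centralBinom_ne_zero
    push_cast
    field_simp
    ring

theorem stmt_13_general (k : ℕ) (hk : Even k) :
    ∫ x in (0:ℝ)..(π/2), x * cos x ^ k =
      (∫ x in (0:ℝ)..(π/2), x * cos (2*x) ^ k) *
        (1 - (2 / π^2) *
          ∑ j ∈ Finset.Icc 1 (k/2), (2:ℝ)^(2*j) / ((j:ℝ)^2 * ((2*j).choose j : ℝ))) := by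
  obtain ⟨n, rfl⟩ := even_iff_two_dvd.mp hk
  rw [integral_mul_cos_two_mul_pow, integral_mul_cos_pow_two_mul,
    integral_mul_cos_pow_two_mul_zero_pi, Nat.mul_div_cancel_left n two_pos]
  simp only [pow_mul, ← Nat.centralBinom_eq_two_mul_choose, show (2 : ℝ) ^ 2 = 4 by norm_num]
  field_simp
  ring

theorem stmt_13 (k : ℕ) (hk : Even k) (hk2 : 2 ≤ k) :
    ∫ x in (0:ℝ)..(π/2), x * cos x ^ k =
      (∫ x in (0:ℝ)..(π/2), x * cos (2*x) ^ k) *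
        (1 - (2 / π^2) *
          ∑ j ∈ Finset.Icc 1 (k/2), (2:ℝ)^(2*j) / ((j:ℝ)^2 * ((2*j).choose j : ℝ))) :=
  stmt_13_general k hk
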